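/- arXiv:2207.04091 — 3 statements merged into one kernel-verified Lean document; each statement's English description precedes it below -/
import Mathlib

section
/- Let n be a positive integer, h > 0 a real number, and μ a Borel measure on ℝ^n that is homogeneous of degree h. Let U be a Borel subset of the unit L¹ sphere {x ∈ ℝ^n : ‖x‖₁ = 1} and let f : ℝ^n → ℝ be a linear functional such that m ≤ f(u) ≤ M for every u ∈ U, where 0 < m ≤ M < ∞. Then M^(−h) · μ((0,1]·U) ≤ μ({x ∈ (0,∞)·U : f(x) ≤ 1}) ≤ m^(−h) · μ((0,1]·U). -/
open MeasureTheory Set Pointwise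

/-- Single-cone sandwich estimate: for a degree-`h` homogeneous Borel measure `μ` on `ℝ^n`,
a Borel subset `U` of the unit `L¹` sphere, and a linear functional `f` with
`m ≤ f ≤ M` on `U` (`0 < m ≤ M`), one has
`M⁻ʰ · μ((0,1]·U) ≤ μ {x ∈ (0,∞)·U | f x ≤ 1} ≤ m⁻ʰ · μ((0,1]·U)`. -/
theorem single_cone_sandwich
    (n : ℕ) (hn : 0 < n) (h : ℝ) (hh : 0 < h)
    (μ : Measure (Fin n → ℝ))
    (hhom : ∀ t : ℝ, 0 < t → ∀ A : Set (Fin n → ℝ), MeasurableSet A →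
      μ (t • A) = ENNReal.ofReal (t ^ h) * μ A)
    (U : Set (Fin n → ℝ)) (hUmeas : MeasurableSet U)
    (hUsph : ∀ x ∈ U, (∑ i, |x i|) = 1)
    (f : (Fin n → ℝ) →ₗ[ℝ] ℝ) (m M : ℝ)
    (hm : 0 < m) (hmM : m ≤ M)
    (hfm : ∀ u ∈ U, m ≤ f u) (hfM : ∀ u ∈ U, f u ≤ M) :
    ENNReal.ofReal (M ^ (-h)) * μ (Set.Ioc (0:ℝ) 1 • U) ≤
        μ {x ∈ Set.Ioi (0:ℝ) • U | f x ≤ 1} ∧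
      μ {x ∈ Set.Ioi (0:ℝ) • U | f x ≤ 1} ≤
        ENNReal.ofReal (m ^ (-h)) * μ (Set.Ioc (0:ℝ) 1 • U) := by
  have hM : 0 < M := lt_of_lt_of_le hm hmM
  set N : (Fin n → ℝ) → ℝ := fun x => ∑ i, |x i| with hNdef
  have hNmeas : Measurable N :=
    Finset.measurable_sum _ (fun i _ => (measurable_pi_apply i).abs)
  set A : Set (Fin n → ℝ) := Set.Ioc (0:ℝ) 1 • U with hAdef
  have hAeq : A = {x | 0 < N x ∧ N x ≤ 1 ∧ (N x)⁻¹ • x ∈ U} := by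
    ext x
    constructor
    · intro hx
      rw [hAdef, Set.mem_smul] at hx
      obtain ⟨t, ht, u, hu, rfl⟩ := hx
      have hNx : N (t • u) = t := by
        simp only [hNdef, Pi.smul_apply, smul_eq_mul, abs_mul, abs_of_pos ht.1]
        rw [← Finset.mul_sum, hUsph u hu, mul_one]
      refine ⟨by rw [hNx]; exact ht.1, by rw [hNx]; exact ht.2, ?_⟩
      rw [hNx, inv_smul_smul₀ (ne_of_gt ht.1)]
      exact hu
    · rintro ⟨h1, h2, h3⟩
      rw [hAdef, Set.mem_smul]
      exact ⟨N x, ⟨h1, h2⟩, (N x)⁻¹ • x, h3, smul_inv_smul₀ (ne_of_gt h1) x⟩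
  have hAmeas : MeasurableSet A := by
    rw [hAeq]
    have hg : Measurable fun x : Fin n → ℝ => (N x)⁻¹ • x :=
      measurable_pi_lambda _ fun i => (hNmeas.inv.mul (measurable_pi_apply i))
    exact (measurableSet_lt measurable_const hNmeas).inter
      ((measurableSet_le hNmeas measurable_const).inter (hg hUmeas))
  set S : Set (Fin n → ℝ) := {x ∈ Set.Ioi (0:ℝ) • U | f x ≤ 1} with hSdef
  have incl1 : M⁻¹ • A ⊆ S := by
    rintro x ⟨y, hy, rfl⟩
    rw [hAdef, Set.mem_smul] at hy
    obtain ⟨s, hs, u, hu, rfl⟩ := hy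
    constructor
    · rw [Set.mem_smul]
      refine ⟨M⁻¹ * s, Set.mem_Ioi.mpr (mul_pos (inv_pos.mpr hM) hs.1), u, hu, ?_⟩
      show (M⁻¹ * s) • u = M⁻¹ • s • u
      rw [smul_smul]
    · have hfu : f u ≤ M := hfM u hu
      show f (M⁻¹ • s • u) ≤ 1
      rw [f.map_smul, f.map_smul, smul_eq_mul, smul_eq_mul]
      have h1 : M⁻¹ * (s * f u) ≤ M⁻¹ * (s * M) := by
        apply mul_le_mul_of_nonneg_left _ (by positivity)
        exact mul_le_mul_of_nonneg_left hfu (le_of_lt hs.1)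
      have h2 : M⁻¹ * (s * M) = s := by field_simp
      calc M⁻¹ * (s * f u) ≤ M⁻¹ * (s * M) := h1
        _ = s := h2
        _ ≤ 1 := hs.2
  have incl2 : S ⊆ m⁻¹ • A := by
    rintro x ⟨hxT, hxf⟩
    rw [Set.mem_smul] at hxT
    obtain ⟨t, ht, u, hu, rfl⟩ := hxT
    rw [Set.mem_Ioi] at ht
    have hfx : t * f u ≤ 1 := by rwa [f.map_smul, smul_eq_mul] at hxf
    have hmt : m * t ≤ 1 := by nlinarith [hfm u hu]
    refine ⟨(m * t) • u, ?_, ?_⟩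
    · rw [hAdef, Set.mem_smul]
      exact ⟨m * t, ⟨by positivity, hmt⟩, u, hu, rfl⟩
    · show m⁻¹ • (m * t) • u = t • u
      rw [smul_smul]
      congr 1
      field_simp
  have hMrw' : (M⁻¹ : ℝ) ^ h = M ^ (-h) := by
    rw [Real.inv_rpow hM.le, ← Real.rpow_neg hM.le]
  have hmrw : (m⁻¹ : ℝ) ^ h = m ^ (-h) := by
    rw [Real.inv_rpow hm.le, ← Real.rpow_neg hm.le]
  constructor
  · calc ENNReal.ofReal (M ^ (-h)) * μ A = μ (M⁻¹ • A) := by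
          rw [hhom M⁻¹ (inv_pos.mpr hM) A hAmeas, hMrw']
        _ ≤ μ S := measure_mono incl1
  · calc μ S ≤ μ (m⁻¹ • A) := measure_mono incl2
        _ = ENNReal.ofReal (m ^ (-h)) * μ A := by
          rw [hhom m⁻¹ (inv_pos.mpr hm) A hAmeas, hmrw]
end

section
/- Let n be a positive integer, h > 0 a real number, and μ a Borel measure on ℝ^n that is homogeneous of degree h. Let V be a Borel subset of the unit L¹ sphere {x ∈ ℝ^n : ‖x‖₁ = 1}, let f : ℝ^n → ℝ be a linear functional, and let {U_i}_{i=1}^N be a finite partition of V into Borel sets. For each i set m_i := inf_{u ∈ U_i} f(u) and M_i := sup_{u ∈ U_i} f(u), and assume 0 < m_i ≤ M_i < ∞ for every i. Then Σ_{i=1}^N μ((0,1]·U_i) / M_i^h ≤ μ({x ∈ (0,∞)·V : f(x) ≤ 1}) ≤ Σ_{i=1}^N μ((0,1]·U_i) / m_i^h. -/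
open MeasureTheory Set Pointwise

lemma smul_set_measurable' {n : ℕ} (S : Set ℝ) (hS : MeasurableSet S)
    (hS' : S ⊆ Set.Ioi (0:ℝ))
    (A : Set (Fin n → ℝ)) (hA : MeasurableSet A) (hAs : ∀ x ∈ A, (∑ i, |x i|) = 1) :
    MeasurableSet (S • A) := by
  have hsum : Measurable (fun x : Fin n → ℝ => ∑ i, |x i|) := by
    apply Finset.measurable_sum
    intro i _
    exact (measurable_pi_apply i).abs
  have hg : Measurable (fun x : Fin n → ℝ => ((∑ i, |x i|), (∑ i, |x i|)⁻¹ • x)) := by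
    apply Measurable.prod
    · exact hsum
    · apply measurable_pi_lambda
      intro i
      exact (hsum.inv.mul (measurable_pi_apply i))
  have heq : S • A = (fun x : Fin n → ℝ => ((∑ i, |x i|), (∑ i, |x i|)⁻¹ • x)) ⁻¹' (S ×ˢ A) := by
    ext x
    simp only [Set.mem_preimage, Set.mem_prod]
    constructor
    · rintro ⟨t, ht, a, ha, rfl⟩
      have ht0 : (0:ℝ) < t := hS' ht
      have hts : (∑ i, |(t • a) i|) = t := by
        simp only [Pi.smul_apply, smul_eq_mul, abs_mul, abs_of_pos ht0, ← Finset.mul_sum]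
        rw [hAs a ha, mul_one]
      rw [hts]
      refine ⟨ht, ?_⟩
      rw [smul_smul, inv_mul_cancel₀ (ne_of_gt ht0), one_smul]
      exact ha
    · rintro ⟨hx1, hx2⟩
      have h0 : (0:ℝ) < ∑ i, |x i| := hS' hx1
      refine ⟨_, hx1, _, hx2, ?_⟩
      show (∑ i, |x i|) • ((∑ i, |x i|)⁻¹ • x) = x
      rw [smul_smul, mul_inv_cancel₀ (ne_of_gt h0), one_smul]
  rw [heq]
  exact hg (hS.prod hA)

lemma Ioc_smul_eq' {n : ℕ} (c : ℝ) (hc : 0 < c) (A : Set (Fin n → ℝ)) :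
    Set.Ioc (0:ℝ) c • A = c • (Set.Ioc (0:ℝ) 1 • A) := by
  ext x
  constructor
  · rintro ⟨t, ht, a, ha, rfl⟩
    refine ⟨(c⁻¹ * t) • a, ⟨c⁻¹ * t, ⟨by have := ht.1; positivity, ?_⟩, a, ha, rfl⟩, ?_⟩
    · rw [inv_mul_le_iff₀ hc, mul_one]; exact ht.2
    · show c • ((c⁻¹ * t) • a) = t • a
      rw [smul_smul, ← mul_assoc, mul_inv_cancel₀ (ne_of_gt hc), one_mul]
  · rintro ⟨y, ⟨t, ht, a, ha, rfl⟩, rfl⟩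
    refine ⟨c * t, ⟨by have := ht.1; positivity, ?_⟩, a, ha, ?_⟩
    · calc c * t ≤ c * 1 := by nlinarith [ht.2, hc]
      _ = c := mul_one c
    · show (c * t) • a = c • (t • a)
      rw [smul_smul]
/-- Partition sandwich bounds: for a degree-`h` homogeneous Borel measure `μ` on `ℝ^n`,
a Borel subset `V` of the unit `L¹` sphere, a linear functional `f`, and a finite Borel
partition `{U i}` of `V` with `0 < mᵢ := inf f(Uᵢ)` and `Mᵢ := sup f(Uᵢ) < ∞`, one has
`Σᵢ μ((0,1]·Uᵢ)/Mᵢʰ ≤ μ {x ∈ (0,∞)·V | f x ≤ 1} ≤ Σᵢ μ((0,1]·Uᵢ)/mᵢʰ`. -/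
theorem partition_sandwich
    (n N : ℕ) (hn : 0 < n) (h : ℝ) (hh : 0 < h)
    (μ : Measure (Fin n → ℝ))
    (hhom : ∀ t : ℝ, 0 < t → ∀ A : Set (Fin n → ℝ), MeasurableSet A →
      μ (t • A) = ENNReal.ofReal (t ^ h) * μ A)
    (V : Set (Fin n → ℝ)) (hVmeas : MeasurableSet V)
    (hVsph : ∀ x ∈ V, (∑ i, |x i|) = 1)
    (f : (Fin n → ℝ) →ₗ[ℝ] ℝ)
    (U : Fin N → Set (Fin n → ℝ))
    (hUmeas : ∀ i, MeasurableSet (U i))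
    (hUne : ∀ i, (U i).Nonempty)
    (hUcover : V = ⋃ i, U i)
    (hUdisj : Pairwise (Function.onFun Disjoint U))
    (hinfpos : ∀ i, 0 < sInf (f '' U i))
    (hbdd : ∀ i, BddAbove (f '' U i)) :
    (∑ i, μ (Set.Ioc (0:ℝ) 1 • U i) / ENNReal.ofReal (sSup (f '' U i) ^ h)) ≤
        μ {x ∈ Set.Ioi (0:ℝ) • V | f x ≤ 1} ∧
      μ {x ∈ Set.Ioi (0:ℝ) • V | f x ≤ 1} ≤
        ∑ i, μ (Set.Ioc (0:ℝ) 1 • U i) / ENNReal.ofReal (sInf (f '' U i) ^ h) := by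
  set m : Fin N → ℝ := fun i => sInf (f '' U i) with hm
  set M : Fin N → ℝ := fun i => sSup (f '' U i) with hM
  have hUV : ∀ i, U i ⊆ V := fun i => hUcover ▸ Set.subset_iUnion U i
  have hUsph : ∀ i, ∀ x ∈ U i, (∑ j, |x j|) = 1 := fun i x hx => hVsph x (hUV i hx)
  have hbddB : ∀ i, BddBelow (f '' U i) := by
    intro i
    by_contra hb
    have := hinfpos i
    rw [Real.sInf_of_not_bddBelow hb] at this
    exact lt_irrefl 0 this
  have hmle : ∀ i, ∀ u ∈ U i, m i ≤ f u := fun i u hu => csInf_le (hbddB i) ⟨u, hu, rfl⟩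
  have hleM : ∀ i, ∀ u ∈ U i, f u ≤ M i := fun i u hu => le_csSup (hbdd i) ⟨u, hu, rfl⟩
  have hmpos : ∀ i, 0 < m i := hinfpos
  have hMpos : ∀ i, 0 < M i := by
    intro i
    obtain ⟨u, hu⟩ := hUne i
    exact lt_of_lt_of_le (hmpos i) (le_trans (hmle i u hu) (hleM i u hu))
  -- sum of abs over scaled sphere elements
  have hsumsmul : ∀ i, ∀ t : ℝ, 0 < t → ∀ u ∈ U i, (∑ j, |(t • u) j|) = t := by
    intro i t ht u hu
    simp only [Pi.smul_apply, smul_eq_mul, abs_mul, abs_of_pos ht, ← Finset.mul_sum]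
    rw [hUsph i u hu, mul_one]
  have hfcont : Continuous f := f.continuous_of_finiteDimensional
  set T : Fin N → Set (Fin n → ℝ) := fun i => {x ∈ Set.Ioi (0:ℝ) • U i | f x ≤ 1} with hT
  have hTmeas : ∀ i, MeasurableSet (T i) := by
    intro i
    exact (smul_set_measurable' (Set.Ioi 0) measurableSet_Ioi (subset_refl _)
      (U i) (hUmeas i) (hUsph i)).inter (hfcont.measurable measurableSet_Iic)
  have hmid : {x ∈ Set.Ioi (0:ℝ) • V | f x ≤ 1} = ⋃ i, T i := by
    rw [hUcover]
    ext x
    simp only [hT, Set.mem_setOf_eq, Set.mem_iUnion]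
    constructor
    · rintro ⟨⟨t, ht, u, hu, rfl⟩, hf⟩
      rw [Set.mem_iUnion] at hu
      obtain ⟨i, hi⟩ := hu
      exact ⟨i, ⟨t, ht, u, hi, rfl⟩, hf⟩
    · rintro ⟨i, ⟨t, ht, u, hu, rfl⟩, hf⟩
      exact ⟨⟨t, ht, u, Set.mem_iUnion.mpr ⟨i, hu⟩, rfl⟩, hf⟩
  have hTdisj : Pairwise (Function.onFun Disjoint T) := by
    intro i j hij
    rw [Function.onFun, Set.disjoint_left]
    rintro x ⟨⟨t, ht, u, hu, rfl⟩, -⟩ ⟨⟨s, hs, v, hv, heq⟩, -⟩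
    have ht0 : (0:ℝ) < t := ht
    have hs0 : (0:ℝ) < s := hs
    have heq' : s • v = t • u := heq
    have hts : t = s := by
      have h1 := hsumsmul i t ht0 u hu
      have h2 := hsumsmul j s hs0 v hv
      rw [heq'] at h2
      rw [← h1, h2]
    have huv : u = v := by
      apply smul_right_injective (Fin n → ℝ) (ne_of_gt ht0)
      show t • u = t • v
      rw [← heq', hts]
    exact Set.disjoint_left.mp (hUdisj hij) hu (huv ▸ hv)
  have hsub1 : ∀ i, Set.Ioc (0:ℝ) (M i)⁻¹ • U i ⊆ T i := by
    rintro i x ⟨t, ht, u, hu, rfl⟩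
    refine ⟨⟨t, ht.1, u, hu, rfl⟩, ?_⟩
    have : f (t • u) = t * f u := by rw [f.map_smul, smul_eq_mul]
    rw [this]
    calc t * f u ≤ t * M i := by
          exact mul_le_mul_of_nonneg_left (hleM i u hu) (le_of_lt ht.1)
      _ ≤ (M i)⁻¹ * M i := by
          exact mul_le_mul_of_nonneg_right ht.2 (le_of_lt (hMpos i))
      _ = 1 := inv_mul_cancel₀ (ne_of_gt (hMpos i))
  have hsub2 : ∀ i, T i ⊆ Set.Ioc (0:ℝ) (m i)⁻¹ • U i := by
    rintro i x ⟨⟨t, ht, u, hu, rfl⟩, hf⟩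
    have ht0 : (0:ℝ) < t := ht
    have hfm : f (t • u) = t * f u := by rw [f.map_smul, smul_eq_mul]
    rw [hfm] at hf
    refine ⟨t, ⟨ht0, ?_⟩, u, hu, rfl⟩
    have h1 : t * m i ≤ 1 :=
      le_trans (mul_le_mul_of_nonneg_left (hmle i u hu) (le_of_lt ht0)) hf
    have h2 := mul_le_mul_of_nonneg_right h1 (inv_nonneg.mpr (le_of_lt (hmpos i)))
    rwa [mul_assoc, mul_inv_cancel₀ (ne_of_gt (hmpos i)), mul_one, one_mul] at h2
  have hmeas01 : ∀ i, MeasurableSet (Set.Ioc (0:ℝ) 1 • U i) :=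
    fun i => smul_set_measurable' (Set.Ioc 0 1) measurableSet_Ioc
      (fun t ht => ht.1) (U i) (hUmeas i) (hUsph i)
  have key : ∀ i, ∀ c : ℝ, 0 < c →
      μ (Set.Ioc (0:ℝ) c⁻¹ • U i) = μ (Set.Ioc (0:ℝ) 1 • U i) / ENNReal.ofReal (c ^ h) := by
    intro i c hc
    rw [Ioc_smul_eq' c⁻¹ (by positivity), hhom c⁻¹ (by positivity) _ (hmeas01 i),
      Real.inv_rpow hc.le, ENNReal.ofReal_inv_of_pos (Real.rpow_pos_of_pos hc h),
      div_eq_mul_inv, mul_comm]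
  rw [hmid, measure_iUnion hTdisj hTmeas, tsum_fintype]
  constructor
  · apply Finset.sum_le_sum
    intro i _
    rw [← key i (M i) (hMpos i)]
    exact measure_mono (hsub1 i)
  · apply Finset.sum_le_sum
    intro i _
    rw [← key i (m i) (hmpos i)]
    exact measure_mono (hsub2 i)
end

section
/- Let n be a positive integer, h ≥ 1 a real number, and μ a Borel measure on ℝ^n that is homogeneous of degree h. Let V be a Borel subset of the unit L¹ sphere {x ∈ ℝ^n : ‖x‖₁ = 1} with μ((0,1]·V) < ∞, and let f : ℝ^n → ℝ be a linear functional satisfying |f(x) − f(y)| ≤ K·‖x − y‖₁ for all x, y ∈ ℝ^n and f(u) ≥ c for all u ∈ V, where K ≥ 0 and c > 0. Let {U_i}_{i=1}^N be a finite partition of V into Borel sets, and for each i set m_i := inf_{u ∈ U_i} f(u) and M_i := sup_{u ∈ U_i} f(u) (so c ≤ m_i ≤ M_i ≤ m_i + K·diam₁(U_i) < ∞). Then Σ_{i=1}^N μ((0,1]·U_i) · (m_i^(−h) − M_i^(−h)) ≤ h · K · c^(−(h+1)) · μ((0,1]·V) · max_{1 ≤ i ≤ N} diam₁(U_i), where diam₁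 denotes diameter with respect to the L¹ norm. -/
/-! On a cell `Uᵢ` the values of `f` lie in `[mᵢ, Mᵢ] ⊆ [c, ∞)` with
`Mᵢ - mᵢ ≤ K·diam₁(Uᵢ)`, and `x ↦ x^(-h)` is `h·c^(-(h+1))`-Lipschitz on `[c, ∞)`, so each
bracket is at most `h·K·c^(-(h+1))·maxᵢ diam₁(Uᵢ)`. The cones `(0,1]·Uᵢ` partition `(0,1]·V`
(a point of the cone determines its `L¹` norm and its direction), so their masses add up to
`μ((0,1]·V)`. -/

open MeasureTheory Set Pointwise

noncomputable def norm1 {n : ℕ} (x : Fin n → ℝ) : ℝ := ∑ i, |x i|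

noncomputable def diam1 {n : ℕ} (U : Set (Fin n → ℝ)) : ℝ :=
  sSup {d | ∃ x ∈ U, ∃ y ∈ U, d = norm1 (x - y)}

lemma rpow_neg_sub_rpow_neg_le {h c a b : ℝ} (hh : 0 ≤ h) (hc : 0 < c) (hca : c ≤ a)
    (hab : a ≤ b) : a ^ (-h) - b ^ (-h) ≤ h * c ^ (-(h + 1)) * (b - a) := by
  have hderiv : ∀ x ∈ Ioi (0 : ℝ), HasDerivAt (fun x : ℝ => -x ^ (-h)) (h * x ^ (-h - 1)) x :=
    fun x hx => by simpa using (Real.hasDerivAt_rpow_const (p := -h) (Or.inl hx.ne')).fun_neg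
  have hdiff : DifferentiableOn ℝ (fun x : ℝ => -x ^ (-h)) (Ici c) := fun x hx =>
    (hderiv x (hc.trans_le hx)).differentiableAt.differentiableWithinAt
  have hderiv_le : ∀ x ∈ interior (Ici c),
      deriv (fun x : ℝ => -x ^ (-h)) x ≤ h * c ^ (-h - 1) := by
    intro x hx
    rw [interior_Ici] at hx
    rw [(hderiv x (hc.trans hx)).deriv]
    exact mul_le_mul_of_nonneg_left (Real.rpow_le_rpow_of_nonpos hc hx.le (by linarith)) hh
  have := (convex_Ici c).image_sub_le_mul_sub_of_deriv_le hdiff.continuousOn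
    (hdiff.mono interior_subset) hderiv_le a hca b (hca.trans hab) hab
  rw [neg_add']
  linarith

section Oscillation

variable {s : Set ℝ} {δ : ℝ}

lemma bddAbove_of_forall_sub_le (hs : s.Nonempty) (hδ : ∀ x ∈ s, ∀ y ∈ s, x - y ≤ δ) :
    BddAbove s := by
  obtain ⟨y, hy⟩ := hs
  exact ⟨y + δ, fun x hx => by linarith [hδ x hx y hy]⟩

lemma csSup_le_csInf_add_of_forall_sub_le (hs : s.Nonempty)
    (hδ : ∀ x ∈ s, ∀ y ∈ s, x - y ≤ δ) : sSup s ≤ sInf s + δ :=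
  csSup_le hs fun x hx => by
    have : x - δ ≤ sInf s := le_csInf hs fun y hy => by linarith [hδ x hx y hy]
    linarith

end Oscillation

section Norm1

variable {n : ℕ}

lemma norm1_smul (t : ℝ) (x : Fin n → ℝ) : norm1 (t • x) = |t| * norm1 x := by
  simp [norm1, abs_mul, Finset.mul_sum]

lemma norm1_sub_le (x y : Fin n → ℝ) : norm1 (x - y) ≤ norm1 x + norm1 y := by
  rw [norm1, norm1, norm1, ← Finset.sum_add_distrib]
  exact Finset.sum_le_sum fun i _ => abs_sub (x i) (y i)

lemma continuous_norm1 : Continuous (norm1 : (Fin n → ℝ) → ℝ) :=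
  continuous_finsetSum _ fun i _ => (continuous_apply i).abs

lemma norm1_sub_le_diam1 {U : Set (Fin n → ℝ)} (hU : ∀ x ∈ U, norm1 x = 1) {x y : Fin n → ℝ}
    (hx : x ∈ U) (hy : y ∈ U) : norm1 (x - y) ≤ diam1 U := by
  refine le_csSup ⟨2, ?_⟩ ⟨x, hx, y, hy, rfl⟩
  rintro _ ⟨x', hx', y', hy', rfl⟩
  linarith [norm1_sub_le x' y', hU x' hx', hU y' hy']

end Norm1

section Cone

variable {n : ℕ} {S : Set ℝ} {W W' : Set (Fin n → ℝ)}

lemma smul_eq_preimage_of_norm1_eq_one (hS : S ⊆ Ioi 0) (hW : ∀ x ∈ W, norm1 x = 1) :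
    S • W = norm1 ⁻¹' S ∩ (fun x => (norm1 x)⁻¹ • x) ⁻¹' W := by
  ext x
  constructor
  · rintro ⟨t, ht, u, hu, rfl⟩
    have ht0 : 0 < t := hS ht
    have hnorm : norm1 (t • u) = t := by rw [norm1_smul, hW u hu, abs_of_pos ht0, mul_one]
    refine ⟨by rwa [mem_preimage, hnorm], ?_⟩
    rwa [mem_preimage, hnorm, inv_smul_smul₀ ht0.ne']
  · rintro ⟨hxS, hxW⟩
    exact ⟨norm1 x, hxS, (norm1 x)⁻¹ • x, hxW, smul_inv_smul₀ (hS hxS).ne' x⟩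

lemma measurableSet_smul_of_norm1_eq_one (hS : S ⊆ Ioi 0) (hSm : MeasurableSet S)
    (hW : ∀ x ∈ W, norm1 x = 1) (hWm : MeasurableSet W) : MeasurableSet (S • W) := by
  rw [smul_eq_preimage_of_norm1_eq_one hS hW]
  have hdir : Measurable fun x : Fin n → ℝ => (norm1 x)⁻¹ • x :=
    continuous_norm1.measurable.inv.smul measurable_id
  exact (continuous_norm1.measurable hSm).inter (hdir hWm)

lemma disjoint_smul_of_norm1_eq_one (hS : S ⊆ Ioi 0) (hW : ∀ x ∈ W, norm1 x = 1)
    (hW' : ∀ x ∈ W', norm1 x = 1) (hd : Disjoint W W') : Disjoint (S • W) (S • W') := by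
  rw [smul_eq_preimage_of_norm1_eq_one hS hW, smul_eq_preimage_of_norm1_eq_one hS hW']
  exact (hd.preimage _).mono inter_subset_right inter_subset_right

lemma measure_smul_iUnion_of_norm1_eq_one {ι : Type*} [Fintype ι] (μ : Measure (Fin n → ℝ))
    (hS : S ⊆ Ioi 0) (hSm : MeasurableSet S) {U : ι → Set (Fin n → ℝ)}
    (hU : ∀ i, ∀ x ∈ U i, norm1 x = 1) (hUm : ∀ i, MeasurableSet (U i))
    (hUd : Pairwise (Function.onFun Disjoint U)) :
    μ (S • ⋃ i, U i) = ∑ i, μ (S • U i) := by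
  rw [smul_iUnion, measure_iUnion
    (fun i j hij => disjoint_smul_of_norm1_eq_one hS (hU i) (hU j) (hUd hij))
    (fun i => measurableSet_smul_of_norm1_eq_one hS hSm (hU i) (hUm i)), tsum_fintype]

end Cone

lemma rpow_neg_sInf_sub_rpow_neg_sSup_le {n : ℕ} {U : Set (Fin n → ℝ)}
    {f : (Fin n → ℝ) → ℝ} {h K c : ℝ} (hh : 0 ≤ h) (hK : 0 ≤ K) (hc : 0 < c)
    (hU : ∀ x ∈ U, norm1 x = 1) (hlip : ∀ u ∈ U, ∀ v ∈ U, |f u - f v| ≤ K * norm1 (u - v))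
    (hlow : ∀ u ∈ U, c ≤ f u) :
    sInf (f '' U) ^ (-h) - sSup (f '' U) ^ (-h) ≤ h * K * c ^ (-(h + 1)) * diam1 U := by
  rcases U.eq_empty_or_nonempty with rfl | hne
  · simp [diam1] -- `sInf ∅ = sSup ∅ = 0` in `ℝ`, so both sides vanish
  have hosc : ∀ x ∈ f '' U, ∀ y ∈ f '' U, x - y ≤ K * diam1 U := by
    rintro _ ⟨u, hu, rfl⟩ _ ⟨v, hv, rfl⟩
    exact (le_abs_self _).trans
      ((hlip u hu v hv).trans (mul_le_mul_of_nonneg_left (norm1_sub_le_diam1 hU hu hv) hK))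
  have hlow' : ∀ x ∈ f '' U, c ≤ x := forall_mem_image.2 hlow
  have hm : c ≤ sInf (f '' U) := le_csInf (hne.image f) hlow'
  have hmM : sInf (f '' U) ≤ sSup (f '' U) :=
    csInf_le_csSup (hne.image f) ⟨c, hlow'⟩ (bddAbove_of_forall_sub_le (hne.image f) hosc)
  have hMm := csSup_le_csInf_add_of_forall_sub_le (hne.image f) hosc
  calc _ ≤ h * c ^ (-(h + 1)) * (sSup (f '' U) - sInf (f '' U)) :=
        rpow_neg_sub_rpow_neg_le hh hc hm hmM
    _ ≤ h * c ^ (-(h + 1)) * (K * diam1 U) := by gcongr; linarith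
    _ = h * K * c ^ (-(h + 1)) * diam1 U := by ring

theorem leading_term_error_general
    (n N : ℕ) (hN : 0 < N) (h : ℝ) (hh : 1 ≤ h)
    (μ : Measure (Fin n → ℝ))
    (V : Set (Fin n → ℝ))
    (hVsph : ∀ x ∈ V, norm1 x = 1)
    (hVfin : μ (Set.Ioc (0:ℝ) 1 • V) < ⊤)
    (f : (Fin n → ℝ) →ₗ[ℝ] ℝ) (K c : ℝ) (hK : 0 ≤ K) (hc : 0 < c)
    (hlip : ∀ x y : Fin n → ℝ, |f x - f y| ≤ K * norm1 (x - y))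
    (hlow : ∀ u ∈ V, c ≤ f u)
    (U : Fin N → Set (Fin n → ℝ))
    (hUmeas : ∀ i, MeasurableSet (U i))
    (hUcover : V = ⋃ i, U i)
    (hUdisj : Pairwise (Function.onFun Disjoint U)) :
    (∑ i, (μ (Set.Ioc (0:ℝ) 1 • U i)).toReal *
        ((sInf (f '' U i)) ^ (-h) - (sSup (f '' U i)) ^ (-h))) ≤
      h * K * c ^ (-(h + 1)) * (μ (Set.Ioc (0:ℝ) 1 • V)).toReal *
        Finset.univ.sup' ⟨⟨0, hN⟩, Finset.mem_univ _⟩ (fun i => diam1 (U i)) := by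
  have hUV : ∀ i, U i ⊆ V := fun i => hUcover ▸ subset_iUnion U i
  have hUsph : ∀ i, ∀ x ∈ U i, norm1 x = 1 := fun i x hx => hVsph x (hUV i hx)
  set D := Finset.univ.sup' ⟨⟨0, hN⟩, Finset.mem_univ _⟩ (fun i => diam1 (U i))
  have hcell : ∀ i, sInf (f '' U i) ^ (-h) - sSup (f '' U i) ^ (-h) ≤
      h * K * c ^ (-(h + 1)) * D :=
    fun i => (rpow_neg_sInf_sub_rpow_neg_sSup_le (by linarith) hK hc (hUsph i)
      (fun u _ v _ => hlip u v) fun u hu => hlow u (hUV i hu)).trans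
        (by gcongr; exact Finset.le_sup' (fun j => diam1 (U j)) (Finset.mem_univ i))
  have hmass : (μ (Ioc (0:ℝ) 1 • V)).toReal = ∑ i, (μ (Ioc (0:ℝ) 1 • U i)).toReal := by
    rw [hUcover, measure_smul_iUnion_of_norm1_eq_one μ Ioc_subset_Ioi_self measurableSet_Ioc
      hUsph hUmeas hUdisj, ENNReal.toReal_sum]
    exact fun i _ => ((measure_mono (smul_subset_smul_left (hUV i))).trans_lt hVfin).ne
  calc _ ≤ ∑ i, (μ (Ioc (0:ℝ) 1 • U i)).toReal * (h * K * c ^ (-(h + 1)) * D) :=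
        Finset.sum_le_sum fun i _ => mul_le_mul_of_nonneg_left (hcell i) ENNReal.toReal_nonneg
    _ = _ := by rw [← Finset.sum_mul, ← hmass]; ring

/-- Quantitative leading-term comparison: for a degree-`h` homogeneous Borel measure `μ`
(`h ≥ 1`), a Borel subset `V` of the unit `L¹` sphere with `μ((0,1]·V) < ∞`, a linear
functional `f` that is `K`-Lipschitz for the `L¹` norm and `≥ c > 0` on `V`, and a finite
Borel partition `{U i}` of `V`, with `mᵢ := inf f(Uᵢ)`, `Mᵢ := sup f(Uᵢ)`, one has
`Σᵢ μ((0,1]·Uᵢ)·(mᵢ⁻ʰ − Mᵢ⁻ʰ) ≤ h·K·c^(−(h+1))·μ((0,1]·V)·maxᵢ diam₁(Uᵢ)`. -/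
theorem leading_term_error
    (n N : ℕ) (hn : 0 < n) (hN : 0 < N) (h : ℝ) (hh : 1 ≤ h)
    (μ : Measure (Fin n → ℝ))
    (hhom : ∀ t : ℝ, 0 < t → ∀ A : Set (Fin n → ℝ), MeasurableSet A →
      μ (t • A) = ENNReal.ofReal (t ^ h) * μ A)
    (V : Set (Fin n → ℝ)) (hVmeas : MeasurableSet V)
    (hVsph : ∀ x ∈ V, norm1 x = 1)
    (hVfin : μ (Set.Ioc (0:ℝ) 1 • V) < ⊤)
    (f : (Fin n → ℝ) →ₗ[ℝ] ℝ) (K c : ℝ) (hK : 0 ≤ K) (hc : 0 < c)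
    (hlip : ∀ x y : Fin n → ℝ, |f x - f y| ≤ K * norm1 (x - y))
    (hlow : ∀ u ∈ V, c ≤ f u)
    (U : Fin N → Set (Fin n → ℝ))
    (hUmeas : ∀ i, MeasurableSet (U i))
    (hUne : ∀ i, (U i).Nonempty)
    (hUcover : V = ⋃ i, U i)
    (hUdisj : Pairwise (Function.onFun Disjoint U)) :
    (∑ i, (μ (Set.Ioc (0:ℝ) 1 • U i)).toReal *
        ((sInf (f '' U i)) ^ (-h) - (sSup (f '' U i)) ^ (-h))) ≤
      h * K * c ^ (-(h + 1)) * (μ (Set.Ioc (0:ℝ) 1 • V)).toReal *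
        Finset.univ.sup' ⟨⟨0, hN⟩, Finset.mem_univ _⟩ (fun i => diam1 (U i)) :=
  leading_term_error_general n N hN h hh μ V hVsph hVfin f K c hK hc hlip hlow U hUmeas hUcover
    hUdisj
end
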